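/- Let Q : ℝ⁴ → ℝ be the Minkowski quadratic form Q(x) = x₀² − x₁² − x₂² − x₃², and let the Poincaré group be the group of affine maps x ↦ g x + b of ℝ⁴ with g linear, det g = 1, and Q ∘ g = Q. Let Φ = (Φ(x))_{x∈ℝ⁴} be a standard real-valued Gaussian random field on ℝ⁴ with almost surely continuous sample paths, whose finite-dimensional distributions are invariant under the Poincaré group. Then Φ is trivial as a spatial field: for every x ∈ ℝ⁴, Φ(x) = Φ(0) almost surely. -/

import Mathlib

open MeasureTheory ProbabilityTheory
open scoped NNReal

/-- The Minkowski quadratic form on `ℝ⁴`. -/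
def minkowskiQ (x : Fin 4 → ℝ) : ℝ := x 0 ^ 2 - x 1 ^ 2 - x 2 ^ 2 - x 3 ^ 2

/-!
Lorentz boosts contract every lightlike vector towards `0`, so invariance of the two-point law
`(Φ v, Φ 0)` together with continuity of the paths at `0` forces `Φ v = Φ 0` almost surely for
lightlike `v` (the pair has the law of `(Φ (g_n v), Φ 0)`, which tends to the diagonal).
Translation invariance makes the set of such `v` closed under addition, and lightlike vectors
span `ℝ⁴`.
-/

open Filter Topology Matrix

section TwoPointLaws

variable {Ω : Type*} [MeasurableSpace Ω] {P : Measure Ω}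

theorem ae_eq_of_map_prod_eq {X Z X' Z' : Ω → ℝ} (hX : Measurable X) (hZ : Measurable Z)
    (hX' : Measurable X') (hZ' : Measurable Z')
    (hlaw : P.map (fun ω => (X ω, Z ω)) = P.map (fun ω => (X' ω, Z' ω))) (h : X' =ᵐ[P] Z') :
    X =ᵐ[P] Z := by
  have hs : MeasurableSet {p : ℝ × ℝ | p.1 ≠ p.2} :=
    (measurableSet_eq_fun measurable_fst measurable_snd).compl
  have hdiag := congrArg (· {p : ℝ × ℝ | p.1 ≠ p.2}) hlaw
  rw [Measure.map_apply (hX.prodMk hZ) hs, Measure.map_apply (hX'.prodMk hZ') hs] at hdiag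
  rw [EventuallyEq, ae_iff] at h ⊢
  exact hdiag.trans h

theorem ae_eq_of_map_prod_eq_of_tendsto [IsFiniteMeasure P] {X Z : Ω → ℝ} {Y : ℕ → Ω → ℝ}
    (hX : Measurable X) (hZ : Measurable Z) (hY : ∀ n, Measurable (Y n))
    (hlaw : ∀ n, P.map (fun ω => (Y n ω, Z ω)) = P.map (fun ω => (X ω, Z ω)))
    (hlim : ∀ᵐ ω ∂P, Tendsto (fun n => Y n ω) atTop (𝓝 (Z ω))) : X =ᵐ[P] Z := by
  have hXZ : TendstoInMeasure P (fun _ : ℕ => X) atTop Z := by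
    intro ε hε
    have hs : MeasurableSet {p : ℝ × ℝ | ε ≤ edist p.1 p.2} :=
      measurableSet_le measurable_const measurable_edist
    have hsame : ∀ n, P {ω | ε ≤ edist (Y n ω) (Z ω)} = P {ω | ε ≤ edist (X ω) (Z ω)} := by
      intro n
      have := congrArg (· {p : ℝ × ℝ | ε ≤ edist p.1 p.2}) (hlaw n)
      rwa [Measure.map_apply ((hY n).prodMk hZ) hs, Measure.map_apply (hX.prodMk hZ) hs] at this
    simpa only [hsame] using
      tendstoInMeasure_of_tendsto_ae (fun n => (hY n).aestronglyMeasurable) hlim ε hε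
  obtain ⟨-, -, hsub⟩ := hXZ.exists_seq_tendsto_ae
  filter_upwards [hsub] with ω hω using tendsto_nhds_unique tendsto_const_nhds hω

end TwoPointLaws

section RandomField

variable {Ω E : Type*} [MeasurableSpace Ω] {P : Measure Ω} {Φ : E → Ω → ℝ}

theorem map_prod_eq_of_map_pi_eq (hmeas : ∀ x, Measurable (Φ x)) {f : E → E}
    (hf : ∀ (n : ℕ) (x : Fin n → E),
      P.map (fun ω (i : Fin n) => Φ (f (x i)) ω) = P.map (fun ω (i : Fin n) => Φ (x i) ω))
    (x y : E) : P.map (fun ω => (Φ (f x) ω, Φ (f y) ω)) = P.map (fun ω => (Φ x ω, Φ y ω)) := by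
  have hpair : Measurable fun p : Fin 2 → ℝ => (p 0, p 1) :=
    (measurable_pi_apply 0).prodMk (measurable_pi_apply 1)
  have h := congrArg (Measure.map fun p : Fin 2 → ℝ => (p 0, p 1)) (hf 2 ![x, y])
  rwa [Measure.map_map hpair (measurable_pi_lambda _ fun _ => hmeas _),
    Measure.map_map hpair (measurable_pi_lambda _ fun _ => hmeas _)] at h

theorem ae_eq_apply_zero_of_tendsto [TopologicalSpace E] [Zero E] [IsFiniteMeasure P]
    (hmeas : ∀ x, Measurable (Φ x)) (hpaths : ∀ᵐ ω ∂P, Continuous fun x => Φ x ω)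
    {v : E} {u : ℕ → E} (hu : Tendsto u atTop (𝓝 0))
    (hlaw : ∀ n, P.map (fun ω => (Φ (u n) ω, Φ 0 ω)) = P.map (fun ω => (Φ v ω, Φ 0 ω))) :
    Φ v =ᵐ[P] Φ 0 :=
  ae_eq_of_map_prod_eq_of_tendsto (hmeas v) (hmeas 0) (fun n => hmeas (u n)) hlaw
    (by filter_upwards [hpaths] with ω hω using (hω.tendsto 0).comp hu)

theorem ae_eq_apply_zero_add [AddZeroClass E] (hmeas : ∀ x, Measurable (Φ x))
    (htrans : ∀ b y z : E,
      P.map (fun ω => (Φ (y + b) ω, Φ (z + b) ω)) = P.map (fun ω => (Φ y ω, Φ z ω)))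
    {x y : E} (hx : Φ x =ᵐ[P] Φ 0) (hy : Φ y =ᵐ[P] Φ 0) : Φ (x + y) =ᵐ[P] Φ 0 := by
  have h : Φ (x + y) =ᵐ[P] Φ (0 + y) :=
    ae_eq_of_map_prod_eq (hmeas _) (hmeas _) (hmeas x) (hmeas 0) (htrans y x 0) hx
  rw [zero_add] at h
  exact h.trans hy

theorem ae_eq_apply_zero_of_mem_span [AddCommMonoid E] [Module ℝ E] {ι : Type*} [Fintype ι]
    {v : ι → E} (hmeas : ∀ x, Measurable (Φ x))
    (htrans : ∀ b y z : E,
      P.map (fun ω => (Φ (y + b) ω, Φ (z + b) ω)) = P.map (fun ω => (Φ y ω, Φ z ω)))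
    (hv : ∀ i (a : ℝ), Φ (a • v i) =ᵐ[P] Φ 0) {x : E} (hx : x ∈ Submodule.span ℝ (Set.range v)) :
    Φ x =ᵐ[P] Φ 0 := by
  obtain ⟨c, rfl⟩ := (Submodule.mem_span_range_iff_exists_fun ℝ).mp hx
  exact Finset.sum_induction _ (fun y => Φ y =ᵐ[P] Φ 0)
    (fun _ _ => ae_eq_apply_zero_add hmeas htrans) EventuallyEq.rfl fun i _ => hv i (c i)

end RandomField

section Lorentz

def IsProperLorentz (g : (Fin 4 → ℝ) →ₗ[ℝ] (Fin 4 → ℝ)) : Prop :=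
  LinearMap.det g = 1 ∧ ∀ x, minkowskiQ (g x) = minkowskiQ x

/-- The boost of rapidity `log t` along the `k`-th spatial axis. -/
noncomputable def boost (k : Fin 4) (t : ℝ) : Matrix (Fin 4) (Fin 4) ℝ :=
  Matrix.of fun i j =>
    if i = j then (if i = 0 ∨ i = k then (t + t⁻¹) / 2 else 1)
    else if (i = 0 ∧ j = k) ∨ (i = k ∧ j = 0) then (t - t⁻¹) / 2 else 0

variable {k : Fin 4} {t : ℝ}

theorem det_boost (hk : k ≠ 0) (ht : t ≠ 0) : (boost k t).det = 1 := by
  rw [Matrix.det_succ_row_zero]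
  fin_cases k <;> simp [boost, Fin.sum_univ_succ, Matrix.det_fin_three, Fin.succAbove] at hk ⊢ <;>
    field_simp <;> ring

theorem minkowskiQ_boost_mulVec (hk : k ≠ 0) (ht : t ≠ 0) (x : Fin 4 → ℝ) :
    minkowskiQ (boost k t *ᵥ x) = minkowskiQ x := by
  fin_cases k <;> simp [boost, minkowskiQ, mulVec, dotProduct, Fin.sum_univ_four] at hk ⊢ <;>
    field_simp <;> ring

theorem isProperLorentz_toLin'_boost (hk : k ≠ 0) (ht : t ≠ 0) :
    IsProperLorentz (toLin' (boost k t)) :=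
  ⟨by rw [LinearMap.det_toLin', det_boost hk ht], minkowskiQ_boost_mulVec hk ht⟩

theorem boost_mulVec_single_add (hk : k ≠ 0) (ht : t ≠ 0) :
    boost k t *ᵥ (Pi.single 0 1 + Pi.single k 1) = t • (Pi.single 0 1 + Pi.single k 1) := by
  ext i
  fin_cases k <;> fin_cases i <;> simp [boost, mulVec, dotProduct, Fin.sum_univ_four] at hk ⊢ <;>
    field_simp <;> ring

theorem boost_mulVec_single_sub (hk : k ≠ 0) (ht : t ≠ 0) :
    boost k t *ᵥ (Pi.single 0 1 - Pi.single k 1) = t⁻¹ • (Pi.single 0 1 - Pi.single k 1) := by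
  ext i
  fin_cases k <;> fin_cases i <;> simp [boost, mulVec, dotProduct, Fin.sum_univ_four] at hk ⊢ <;>
    field_simp <;> ring

noncomputable def lightlikeBasis : Fin 4 → Fin 4 → ℝ :=
  ![Pi.single 0 1 + Pi.single 1 1, Pi.single 0 1 - Pi.single 1 1,
    Pi.single 0 1 + Pi.single 2 1, Pi.single 0 1 + Pi.single 3 1]

theorem span_range_lightlikeBasis : Submodule.span ℝ (Set.range lightlikeBasis) = ⊤ := by
  refine Submodule.eq_top_iff'.mpr fun x => (Submodule.mem_span_range_iff_exists_fun ℝ).mpr ?_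
  refine ⟨![(x 0 + x 1 - x 2 - x 3) / 2, (x 0 - x 1 - x 2 - x 3) / 2, x 2, x 3], ?_⟩
  ext i
  fin_cases i <;> simp [lightlikeBasis, Fin.sum_univ_four] <;> ring

theorem exists_isProperLorentz_apply_lightlikeBasis (i : Fin 4) (ht : t ≠ 0) :
    ∃ g, IsProperLorentz g ∧ g (lightlikeBasis i) = t • lightlikeBasis i := by
  obtain ⟨k, s, hk, hs, hv⟩ : ∃ k s, k ≠ 0 ∧ s ≠ 0 ∧
      boost k s *ᵥ lightlikeBasis i = t • lightlikeBasis i := by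
    fin_cases i
    · exact ⟨1, t, by decide, ht, boost_mulVec_single_add (by decide) ht⟩
    · refine ⟨1, t⁻¹, by decide, inv_ne_zero ht, ?_⟩
      have h := boost_mulVec_single_sub (k := 1) (by decide) (inv_ne_zero ht)
      rwa [inv_inv] at h
    · exact ⟨2, t, by decide, ht, boost_mulVec_single_add (by decide) ht⟩
    · exact ⟨3, t, by decide, ht, boost_mulVec_single_add (by decide) ht⟩
  exact ⟨toLin' (boost k s), isProperLorentz_toLin'_boost hk hs, hv⟩

end Lorentz

theorem poincare_invariant_gaussian_field_is_spatially_trivial_general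
    {Ω : Type*} [MeasurableSpace Ω] (P : Measure Ω) [IsProbabilityMeasure P]
    (Φ : (Fin 4 → ℝ) → Ω → ℝ)
    (hmeas : ∀ x, Measurable (Φ x))
    -- almost surely continuous sample paths
    (hpaths : ∀ᵐ ω ∂P, Continuous fun x => Φ x ω)
    -- invariance of the finite-dimensional distributions under the Poincaré group
    (hinv : ∀ (g : (Fin 4 → ℝ) →ₗ[ℝ] (Fin 4 → ℝ)) (b : Fin 4 → ℝ),
      LinearMap.det g = 1 → (∀ x, minkowskiQ (g x) = minkowskiQ x) →
      ∀ (n : ℕ) (x : Fin n → (Fin 4 → ℝ)),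
        Measure.map (fun ω (i : Fin n) => Φ (g (x i) + b) ω) P =
          Measure.map (fun ω (i : Fin n) => Φ (x i) ω) P) :
    ∀ x : Fin 4 → ℝ, ∀ᵐ ω ∂P, Φ x ω = Φ 0 ω := by
  have hlaw : ∀ g b, IsProperLorentz g → ∀ y z,
      P.map (fun ω => (Φ (g y + b) ω, Φ (g z + b) ω)) = P.map (fun ω => (Φ y ω, Φ z ω)) :=
    fun g b hg => map_prod_eq_of_map_pi_eq hmeas (hinv g b hg.1 hg.2)
  have hray : ∀ i (a : ℝ), Φ (a • lightlikeBasis i) =ᵐ[P] Φ 0 := by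
    intro i a
    choose g hg hgv using fun n : ℕ =>
      exists_isProperLorentz_apply_lightlikeBasis i (t := ((n : ℝ) + 1)⁻¹) (by positivity)
    refine ae_eq_apply_zero_of_tendsto hmeas hpaths
      (u := fun n => ((n : ℝ) + 1)⁻¹ • a • lightlikeBasis i) ?_ fun n => ?_
    · simpa using (tendsto_one_div_add_atTop_nhds_zero_nat (𝕜 := ℝ)).smul_const
        (a • lightlikeBasis i)
    · simpa [hgv, smul_comm a] using hlaw (g n) 0 (hg n) (a • lightlikeBasis i) 0
  intro x
  exact ae_eq_apply_zero_of_mem_span hmeas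
    (fun b => hlaw LinearMap.id b ⟨LinearMap.det_id, fun _ => rfl⟩) hray
    (by simp [span_range_lightlikeBasis])

/-- **Corollary 3.1.** A standard real-valued Gaussian random field on `ℝ⁴` with almost surely
continuous sample paths whose finite-dimensional distributions are invariant under the Poincaré
group (affine maps `x ↦ g x + b` with `det g = 1` and `Q ∘ g = Q`) is trivial as a spatial
field: `Φ(x) = Φ(0)` almost surely, for every `x`. -/
theorem poincare_invariant_gaussian_field_is_spatially_trivial
    {Ω : Type*} [MeasurableSpace Ω] (P : Measure Ω) [IsProbabilityMeasure P]
    (Φ : (Fin 4 → ℝ) → Ω → ℝ)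
    (hmeas : ∀ x, Measurable (Φ x))
    -- Gaussian field: every finite real linear combination is a (possibly degenerate) Gaussian
    (hgauss : ∀ (n : ℕ) (x : Fin n → (Fin 4 → ℝ)) (a : Fin n → ℝ),
      ∃ (m : ℝ) (v : ℝ≥0),
        Measure.map (fun ω => ∑ i, a i * Φ (x i) ω) P = gaussianReal m v)
    -- standard: centered with unit variance
    (hcentered : ∀ x, ∫ ω, Φ x ω ∂P = 0)
    (hstd : ∀ x, ∫ ω, (Φ x ω) ^ 2 ∂P = 1)
    -- almost surely continuous sample paths
    (hpaths : ∀ᵐ ω ∂P, Continuous fun x => Φ x ω)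
    -- invariance of the finite-dimensional distributions under the Poincaré group
    (hinv : ∀ (g : (Fin 4 → ℝ) →ₗ[ℝ] (Fin 4 → ℝ)) (b : Fin 4 → ℝ),
      LinearMap.det g = 1 → (∀ x, minkowskiQ (g x) = minkowskiQ x) →
      ∀ (n : ℕ) (x : Fin n → (Fin 4 → ℝ)),
        Measure.map (fun ω (i : Fin n) => Φ (g (x i) + b) ω) P =
          Measure.map (fun ω (i : Fin n) => Φ (x i) ω) P) :
    ∀ x : Fin 4 → ℝ, ∀ᵐ ω ∂P, Φ x ω = Φ 0 ω :=
  poincare_invariant_gaussian_field_is_spatially_trivial_general P Φ hmeas hpaths hinv
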